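/- Let A0, A1, B0, B1 be nonempty finite index types and Θ : (Matrix A0 A0 ℂ →ₗ Matrix A1 A1 ℂ) →ₗ (Matrix B0 B0 ℂ →ₗ Matrix B1 B1 ℂ) a linear supermap. Then Θ satisfies the DISC (dephasing-covariance) condition Δ_B ∘ Θ = Θ ∘ Δ_A if and only if its Choi matrix satisfies (𝒟_A ⊗ id_B)(𝐉(Θ)) = (id_A ⊗ 𝒟_B)(𝐉(Θ)), where (𝒟_A ⊗ id_B) dephases the first (A0×A1)-factor of the index and (id_A ⊗ 𝒟_B) dephases the second (B0×B1)-factor. -/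

import Mathlib

open Matrix Kronecker ComplexOrder

noncomputable section

/-- Dephasing (decoherence) map as a linear map. -/
def deph {ι : Type*} [DecidableEq ι] : Matrix ι ι ℂ →ₗ[ℂ] Matrix ι ι ℂ where
  toFun M := Matrix.of fun i j => if i = j then M i j else 0
  map_add' X Y := by
    ext i j
    by_cases h : i = j <;> simp [h]
  map_smul' c X := by
    ext i j
    by_cases h : i = j <;> simp [h]

/-- Choi matrix of a linear map between matrix algebras. -/
def choi {ι κ : Type*} [Fintype ι] [DecidableEq ι]
    (Φ : Matrix ι ι ℂ →ₗ[ℂ] Matrix κ κ ℂ) : Matrix (ι × κ) (ι × κ) ℂ :=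
  Matrix.of fun p q => Φ (Matrix.single p.1 q.1 1) p.2 q.2

variable {A0 A1 B0 B1 : Type*}

/-- The canonical basis maps `E^{ijkl}(ρ) = ρ i j • E_{kl}`. -/
def basisMap [DecidableEq A1] (i j : A0) (k l : A1) :
    Matrix A0 A0 ℂ →ₗ[ℂ] Matrix A1 A1 ℂ where
  toFun ρ := ρ i j • Matrix.single k l 1
  map_add' X Y := by simp [add_smul]
  map_smul' c X := by simp [smul_smul]

/-- Choi matrix of a supermap:
`𝐉(Θ) = Σ_{i,j,k,l} J(E^{ijkl}) ⊗ₖ J(Θ[E^{ijkl}])`. -/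
def superChoi [Fintype A0] [DecidableEq A0] [Fintype A1] [DecidableEq A1]
    [Fintype B0] [DecidableEq B0]
    (Θ : (Matrix A0 A0 ℂ →ₗ[ℂ] Matrix A1 A1 ℂ) → (Matrix B0 B0 ℂ →ₗ[ℂ] Matrix B1 B1 ℂ)) :
    Matrix ((A0 × A1) × (B0 × B1)) ((A0 × A1) × (B0 × B1)) ℂ :=
  ∑ i : A0, ∑ j : A0, ∑ k : A1, ∑ l : A1,
    (choi (basisMap i j k l)) ⊗ₖ (choi (Θ (basisMap i j k l)))

/-- Partial dephasing of the first tensor factor of the index. -/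
def dephFst {α β : Type*} [DecidableEq α] (M : Matrix (α × β) (α × β) ℂ) :
    Matrix (α × β) (α × β) ℂ :=
  Matrix.of fun p q => if p.1 = q.1 then M p q else 0

/-- Partial dephasing of the second tensor factor of the index. -/
def dephSnd {α β : Type*} [DecidableEq β] (M : Matrix (α × β) (α × β) ℂ) :
    Matrix (α × β) (α × β) ℂ :=
  Matrix.of fun p q => if p.2 = q.2 then M p q else 0


lemma deph_apply {ι : Type*} [DecidableEq ι] (M : Matrix ι ι ℂ) (i j : ι) :
    deph M i j = if i = j then M i j else 0 := rfl

lemma std_apply {ι : Type*} [DecidableEq ι] (i j a b : ι) (c : ℂ) :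
    Matrix.single i j c a b = if a = i ∧ b = j then c else 0 := by
  simp [Matrix.single, and_comm, eq_comm, ite_and]

lemma choi_basisMap [Fintype A0] [DecidableEq A0] [DecidableEq A1]
    (i j : A0) (k l : A1) (p q : A0 × A1) :
    choi (basisMap i j k l) p q =
      if i = p.1 ∧ j = q.1 ∧ k = p.2 ∧ l = q.2 then 1 else 0 := by
  simp [choi, basisMap, std_apply]
  aesop

lemma superChoi_apply [Fintype A0] [DecidableEq A0] [Fintype A1] [DecidableEq A1]
    [Fintype B0] [DecidableEq B0]
    (Θ : (Matrix A0 A0 ℂ →ₗ[ℂ] Matrix A1 A1 ℂ) → (Matrix B0 B0 ℂ →ₗ[ℂ] Matrix B1 B1 ℂ))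
    (i j : A0) (k l : A1) (b0 b0' : B0) (b1 b1' : B1) :
    superChoi Θ ((i,k),(b0,b1)) ((j,l),(b0',b1'))
      = (Θ (basisMap i j k l)) (Matrix.single b0 b0' 1) b1 b1' := by
  simp only [superChoi, Matrix.sum_apply, Matrix.kroneckerMap_apply, choi_basisMap, ite_and,
    ite_mul, one_mul, zero_mul, Finset.sum_ite_eq', Finset.mem_univ, if_true]
  simp [choi]

lemma deph_std {ι : Type*} [DecidableEq ι] (b0 b0' : ι) :
    deph (Matrix.single b0 b0' (1:ℂ)) =
      if b0 = b0' then Matrix.single b0 b0' 1 else 0 := by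
  ext a b
  simp only [deph_apply, std_apply, apply_ite, Matrix.zero_apply]
  split_ifs <;> simp_all [std_apply]

lemma deph_basisMap [DecidableEq A0] [DecidableEq A1] (i j : A0) (k l : A1) :
    deph ∘ₗ basisMap i j k l ∘ₗ deph =
      if i = j ∧ k = l then basisMap i j k l else 0 := by
  apply LinearMap.ext; intro ρ
  ext a b
  simp only [LinearMap.comp_apply, deph_apply, basisMap, LinearMap.coe_mk, AddHom.coe_mk,
    Matrix.smul_apply, std_apply, apply_ite, LinearMap.zero_apply,
    Matrix.zero_apply, smul_eq_mul]
  split_ifs <;> simp_all [std_apply]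

lemma apply_entry {ι κ : Type*} [Fintype ι] [DecidableEq ι]
    (Φ : Matrix ι ι ℂ →ₗ[ℂ] Matrix κ κ ℂ) (σ : Matrix ι ι ℂ) (a b : κ) :
    Φ σ a b = ∑ p : ι, ∑ q : ι, σ p q * Φ (Matrix.single p q 1) a b := by
  conv_lhs => rw [Matrix.matrix_eq_sum_single σ]
  rw [map_sum]
  simp only [map_sum, Matrix.sum_apply]
  refine Finset.sum_congr rfl fun p _ => Finset.sum_congr rfl fun q _ => ?_
  have h : Matrix.single p q (σ p q) = σ p q • Matrix.single p q (1:ℂ) := by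
    ext x y; simp [std_apply]
  rw [h, LinearMap.map_smul]
  simp

lemma lm_decomp {ι κ : Type*} [Fintype ι] [DecidableEq ι] [Fintype κ] [DecidableEq κ]
    (Φ : Matrix ι ι ℂ →ₗ[ℂ] Matrix κ κ ℂ) :
    Φ = ∑ i : ι, ∑ j : ι, ∑ k : κ, ∑ l : κ,
      (Φ (Matrix.single i j 1) k l) • basisMap i j k l := by
  apply LinearMap.ext; intro ρ
  ext a b
  rw [apply_entry Φ ρ a b]
  simp only [LinearMap.sum_apply, Matrix.sum_apply, LinearMap.smul_apply, basisMap,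
    LinearMap.coe_mk, AddHom.coe_mk, Matrix.smul_apply, std_apply,
    smul_eq_mul, mul_ite, mul_one, mul_zero, ite_and]
  refine Finset.sum_congr rfl fun p _ => Finset.sum_congr rfl fun q _ => ?_
  simp [Finset.sum_ite_eq, mul_comm]

/-- A supermap is DISC (dephasing covariant: `Δ_B ∘ Θ = Θ ∘ Δ_A`) iff the partial
`A`-dephasing of its Choi matrix agrees with the partial `B`-dephasing. -/
theorem DISC_iff_choi
    [Fintype A0] [DecidableEq A0] [Nonempty A0]
    [Fintype A1] [DecidableEq A1] [Nonempty A1]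
    [Fintype B0] [DecidableEq B0] [Nonempty B0]
    [Fintype B1] [DecidableEq B1] [Nonempty B1]
    (Θ : (Matrix A0 A0 ℂ →ₗ[ℂ] Matrix A1 A1 ℂ) →ₗ[ℂ] (Matrix B0 B0 ℂ →ₗ[ℂ] Matrix B1 B1 ℂ)) :
    (∀ N : Matrix A0 A0 ℂ →ₗ[ℂ] Matrix A1 A1 ℂ,
        deph ∘ₗ (Θ N) ∘ₗ deph = Θ (deph ∘ₗ N ∘ₗ deph)) ↔
      dephFst (superChoi fun N => Θ N) = dephSnd (superChoi fun N => Θ N) := by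
  constructor
  · intro h
    ext ⟨⟨i,k⟩,⟨b0,b1⟩⟩ ⟨⟨j,l⟩,⟨b0',b1'⟩⟩
    have h1 := h (basisMap i j k l)
    have h2 : (deph ∘ₗ Θ (basisMap i j k l) ∘ₗ deph) (Matrix.single b0 b0' 1) b1 b1'
        = (Θ (deph ∘ₗ basisMap i j k l ∘ₗ deph)) (Matrix.single b0 b0' 1) b1 b1' := by
      rw [h1]
    rw [deph_basisMap] at h2
    simp only [LinearMap.comp_apply, deph_std] at h2
    have h3 : (if b0 = b0' ∧ b1 = b1' then (Θ (basisMap i j k l)) (Matrix.single b0 b0' 1) b1 b1' else 0)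
        = (if i = j ∧ k = l then (Θ (basisMap i j k l)) (Matrix.single b0 b0' 1) b1 b1' else 0) := by
      by_cases hb0 : b0 = b0'
      · rw [if_pos hb0] at h2
        by_cases hA : i = j ∧ k = l
        · rw [if_pos hA, deph_apply] at h2
          simpa [hb0, hA] using h2
        · rw [if_neg hA, map_zero, LinearMap.zero_apply, deph_apply] at h2
          rw [if_neg hA]
          by_cases hb1 : b1 = b1'
          · rw [if_pos ⟨hb0, hb1⟩]
            rw [if_pos hb1] at h2
            simpa using h2
          · rw [if_neg (fun hc : b0 = b0' ∧ b1 = b1' => hb1 hc.2)]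
      · rw [if_neg hb0, map_zero, deph_apply] at h2
        by_cases hA : i = j ∧ k = l
        · rw [if_pos hA] at h2
          simp only [Matrix.zero_apply, ite_self] at h2
          rw [if_neg (fun hc : b0 = b0' ∧ b1 = b1' => hb0 hc.1), if_pos hA]
          exact h2
        · simp [hb0, hA]
    simp only [dephFst, dephSnd, Matrix.of_apply, superChoi_apply, Prod.mk.injEq]
    exact h3.symm
  · intro h N
    have key : ∀ (i j : A0) (k l : A1) (b0 b0' : B0) (c1 c1' : B1),
        (if i = j ∧ k = l then (Θ (basisMap i j k l)) (Matrix.single b0 b0' 1) c1 c1' else 0)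
        = (if b0 = b0' ∧ c1 = c1' then (Θ (basisMap i j k l)) (Matrix.single b0 b0' 1) c1 c1' else 0) := by
      intro i j k l b0 b0' c1 c1'
      have h' := congrFun (congrFun h ((i,k),(b0,c1))) ((j,l),(b0',c1'))
      simpa [dephFst, dephSnd, superChoi_apply, Prod.mk.injEq] using h'
    have hQ : deph ∘ₗ N ∘ₗ deph = ∑ i : A0, ∑ j : A0, ∑ k : A1, ∑ l : A1,
        (N (Matrix.single i j 1) k l) •
          (if i = j ∧ k = l then basisMap i j k l else 0) := by
      conv_lhs => rw [lm_decomp N]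
      ext σ a b
      simp [LinearMap.sum_apply, map_sum, Matrix.sum_apply, deph_basisMap, LinearMap.comp_apply,
        ← deph_basisMap]
    have hΘN : ∀ (b0 b0' : B0) (a b : B1), (Θ N) (Matrix.single b0 b0' 1) a b =
        ∑ i : A0, ∑ j : A0, ∑ k : A1, ∑ l : A1, (N (Matrix.single i j 1) k l) *
          (Θ (basisMap i j k l)) (Matrix.single b0 b0' 1) a b := by
      intro b0 b0' a b
      conv_lhs => rw [lm_decomp N]
      simp [map_sum, LinearMap.sum_apply, Matrix.sum_apply]
    have hRHS : ∀ (b0 b0' : B0) (a b : B1),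
        (Θ (deph ∘ₗ N ∘ₗ deph)) (Matrix.single b0 b0' 1) a b =
        ∑ i : A0, ∑ j : A0, ∑ k : A1, ∑ l : A1, (N (Matrix.single i j 1) k l) *
          (if i = j ∧ k = l then (Θ (basisMap i j k l)) (Matrix.single b0 b0' 1) a b else 0) := by
      intro b0 b0' a b
      rw [hQ]
      simp only [map_sum, LinearMap.sum_apply, Matrix.sum_apply]
      refine Finset.sum_congr rfl fun i _ => Finset.sum_congr rfl fun j _ =>
        Finset.sum_congr rfl fun k _ => Finset.sum_congr rfl fun l _ => ?_
      by_cases hP : i = j ∧ k = l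
      · simp [hP, _root_.map_smul]
      · simp [hP]
    apply LinearMap.ext; intro ρ
    ext b1 b1'
    rw [LinearMap.comp_apply, LinearMap.comp_apply, deph_apply,
      apply_entry (Θ N) (deph ρ) b1 b1', apply_entry (Θ (deph ∘ₗ N ∘ₗ deph)) ρ b1 b1']
    by_cases hb1 : b1 = b1'
    · subst hb1
      rw [if_pos rfl]
      refine Finset.sum_congr rfl fun b0 _ => Finset.sum_congr rfl fun b0' _ => ?_
      rw [hΘN, hRHS, deph_apply]
      by_cases hb0 : b0 = b0'
      · rw [if_pos hb0]
        congr 1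
        refine Finset.sum_congr rfl fun i _ => Finset.sum_congr rfl fun j _ =>
          Finset.sum_congr rfl fun k _ => Finset.sum_congr rfl fun l _ => ?_
        congr 1
        simpa [hb0] using (key i j k l b0 b0' b1 b1).symm
      · rw [if_neg hb0, zero_mul]
        symm
        rw [Finset.sum_eq_zero, mul_zero]
        intro i _
        refine Finset.sum_eq_zero fun j _ => Finset.sum_eq_zero fun k _ =>
          Finset.sum_eq_zero fun l _ => ?_
        have hk := key i j k l b0 b0' b1 b1
        rw [if_neg (fun hc : b0 = b0' ∧ b1 = b1 => hb0 hc.1)] at hk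
        rw [hk, mul_zero]
    · rw [if_neg hb1]
      symm
      refine Finset.sum_eq_zero fun b0 _ => Finset.sum_eq_zero fun b0' _ => ?_
      rw [hRHS, Finset.sum_eq_zero, mul_zero]
      intro i _
      refine Finset.sum_eq_zero fun j _ => Finset.sum_eq_zero fun k _ =>
        Finset.sum_eq_zero fun l _ => ?_
      have hk := key i j k l b0 b0' b1 b1'
      rw [if_neg (fun hc : b0 = b0' ∧ b1 = b1' => hb1 hc.2)] at hk
      rw [hk, mul_zero]

end
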